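/- For the game CSG({1,2,4}), the Grundy value of the subdivided star S(1,1,1,k) is 1 if k ≡ 0 mod 3, 0 if k ≡ 1 mod 3, and 3 if k ≡ 2 mod 3; i.e. the Grundy sequence in k is purely periodic equal to 1,0,3 repeating. -/

import Mathlib

open SimpleGraph

/-- The minimum excludant of a set of naturals. -/
noncomputable def mex (s : Set ℕ) : ℕ := sInf {n | n ∉ s}

/-- The graph induced on a set of vertices is connected. -/
def ConnOn {V : Type*} (G : SimpleGraph V) (s : Set V) : Prop := (G.induce s).Connected

/-- A legal move in the connected subtraction game CSG(L) on the graph `G`: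
from remaining vertex set `s`, remove the (nonempty) connected set `s \ t` whose
cardinality lies in `L`, leaving `t`, which must be empty or induce a connected graph. -/
def CsgMove {V : Type*} [DecidableEq V] (G : SimpleGraph V) (L : Set ℕ)
    (s t : Finset V) : Prop :=
  t ⊆ s ∧ (s \ t).Nonempty ∧ (s \ t).card ∈ L ∧
    ConnOn G (↑(s \ t) : Set V) ∧ (t = ∅ ∨ ConnOn G (↑t : Set V))

/-- The Grundy value of the position with remaining vertex set `s` in the game
CSG(L) played on `G`, defined by the mex recursion over all legal moves. -/
noncomputable def csgGrundy {V : Type*} [DecidableEq V] (G : SimpleGraph V) (L : Set ℕ)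
    (s : Finset V) : ℕ :=
  mex (Set.range fun t : {t : Finset V // CsgMove G L s t} =>
    have : t.1.card < s.card := by
      obtain ⟨x, hx⟩ := t.2.2.1
      rw [Finset.mem_sdiff] at hx
      exact Finset.card_lt_card ((Finset.ssubset_iff_of_subset t.2.1).2 ⟨x, hx.1, hx.2⟩)
    csgGrundy G L t.1)
termination_by s.card
decreasing_by exact this

/-- The subdivided star with `t` branches of lengths `l 0, …, l (t-1)` appended
to a central vertex `none`. -/
def subdividedStar {t : ℕ} (l : Fin t → ℕ) :
    SimpleGraph (Option (Σ i : Fin t, Fin (l i))) :=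
  SimpleGraph.fromRel fun a b =>
    match a, b with
    | none, some ⟨_, j⟩ => (j : ℕ) = 0
    | some ⟨i, j⟩, some ⟨i', j'⟩ => (i : ℕ) = (i' : ℕ) ∧ (j : ℕ) + 1 = (j' : ℕ)
    | _, _ => False

/-- The graph `G` with a path on `k` new vertices appended at the vertex `u`. -/
def appendPath {V : Type*} (G : SimpleGraph V) (u : V) (k : ℕ) :
    SimpleGraph (V ⊕ Fin k) :=
  SimpleGraph.fromRel fun a b =>
    match a, b with
    | Sum.inl x, Sum.inl y => G.Adj x y
    | Sum.inl x, Sum.inr j => x = u ∧ (j : ℕ) = 0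
    | Sum.inr j, Sum.inr j' => (j : ℕ) + 1 = (j' : ℕ)
    | _, _ => False

/-!
A connected vertex set of `S(1,1,1,k)` is a single leaf, a segment of the tail, or a *star*:
the hub, some of the three leaves and an initial segment of the tail. Every position reached
in the game is empty or of one of these shapes.

A tail segment with `n` vertices has Grundy value `n % 3`: the options have `n - 1`, `n - 2`
or `n - 4` vertices, none congruent to `n` modulo 3, and removing one or two vertices from an
end reaches the smaller residues. For a star with `c` leaves and a tail of length `m`, the
values of the options (a tail segment left after removing a set containing the hub, a shorter
tail, one leaf fewer, or a single leaf left) are known by induction on `c + m`, and their mex is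
`starValue c m`. The theorem is the case `c = 3`, `m = k`.
-/

lemma Nat.exists_eq_Ico_of_ordConnected {s : Set ℕ} {k : ℕ} (hs : s.OrdConnected)
    (hne : s.Nonempty) (hbound : ∀ n ∈ s, n < k) : ∃ a b, a < b ∧ b ≤ k ∧ s = Set.Ico a b := by
  classical
  have ha := Nat.find_spec hne
  have hgap : ∃ n, Nat.find hne ≤ n ∧ n ∉ s := ⟨k, (hbound _ ha).le, fun h => (hbound k h).false⟩
  obtain ⟨hab, hb⟩ := Nat.find_spec hgap
  refine ⟨Nat.find hne, Nat.find hgap, lt_of_le_of_ne hab fun h => hb (h ▸ ha),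
    Nat.find_min' hgap ⟨(hbound _ ha).le, fun h => (hbound k h).false⟩, Set.ext fun n => ?_⟩
  refine ⟨fun hn => ⟨Nat.find_min' hne hn, lt_of_not_ge fun hbn => hb ?_⟩, fun ⟨han, hnb⟩ => ?_⟩
  · exact hs.out ha hn ⟨hab, hbn⟩
  · by_contra hn
    exact Nat.find_min hgap hnb ⟨han, hn⟩

lemma mex_eq {s : Set ℕ} {n : ℕ} (hn : n ∉ s) (hlt : ∀ m < n, m ∈ s) : mex s = n :=
  le_antisymm (Nat.sInf_le hn) <| le_of_not_gt fun h =>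
    Nat.sInf_mem (s := {m | m ∉ s}) ⟨n, hn⟩ (hlt _ h)

section ConnOn

variable {V : Type*} {G : SimpleGraph V}

lemma connOn_singleton (v : V) : ConnOn G {v} := by
  rw [ConnOn, induce_singleton_eq_top]
  exact connected_top

lemma ConnOn.nonempty {s : Set V} (h : ConnOn G s) : s.Nonempty :=
  let ⟨x⟩ := Connected.nonempty h; ⟨x.1, x.2⟩

lemma ConnOn.mem_of_adj_closed {s S : Set V} (h : ConnOn G s) {u v : V} (hu : u ∈ s)
    (huS : u ∈ S) (hv : v ∈ s) (hS : ∀ x ∈ s, ∀ y ∈ s, x ∈ S → G.Adj x y → y ∈ S) : v ∈ S := by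
  by_contra hvS
  obtain ⟨p⟩ := h.preconnected ⟨u, hu⟩ ⟨v, hv⟩
  obtain ⟨d, -, hd1, hd2⟩ := p.exists_boundary_dart (Subtype.val ⁻¹' S) huS hvS
  exact hd2 (hS _ d.fst.2 _ d.snd.2 hd1 d.adj)

lemma connOn_of_exists_adj_lt {s : Set V} {u : V} (hu : u ∈ s) (f : V → ℕ)
    (h : ∀ v ∈ s, v ≠ u → ∃ w ∈ s, G.Adj v w ∧ f w < f v) : ConnOn G s := by
  suffices ∀ n v (hv : v ∈ s), f v = n → (G.induce s).Reachable ⟨v, hv⟩ ⟨u, hu⟩ from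
    (connected_iff_exists_forall_reachable (G := G.induce s)).mpr
      ⟨⟨u, hu⟩, fun ⟨v, hv⟩ => (this _ v hv rfl).symm⟩
  intro n
  induction n using Nat.strong_induction_on with
  | _ n ih =>
    intro v hv hn
    by_cases hvu : v = u
    · subst hvu; rfl
    obtain ⟨w, hw, hadj, hlt⟩ := h v hv hvu
    exact (Adj.reachable (G := G.induce s) (u := ⟨v, hv⟩) (v := ⟨w, hw⟩) hadj).trans
      (ih _ (hn ▸ hlt) w hw rfl)

end ConnOn

section Game

variable {V : Type*} [DecidableEq V] {G : SimpleGraph V} {L : Set ℕ}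

lemma csgGrundy_eq_mex (s : Finset V) :
    csgGrundy G L s = mex {v | ∃ t, CsgMove G L s t ∧ csgGrundy G L t = v} := by
  rw [csgGrundy]
  congr 1
  ext v
  exact ⟨fun ⟨t, ht⟩ => ⟨t.1, t.2, ht⟩, fun ⟨t, ht, hv⟩ => ⟨⟨t, ht⟩, hv⟩⟩

lemma csgGrundy_empty : csgGrundy G L ∅ = 0 := by
  rw [csgGrundy_eq_mex]
  refine mex_eq ?_ (by omega)
  rintro ⟨t, ⟨hts, ⟨x, hx⟩, -⟩, -⟩
  simp [Finset.subset_empty.mp hts] at hx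

lemma CsgMove.card_sub_mem {s t : Finset V} (h : CsgMove G L s t) : s.card - t.card ∈ L := by
  rw [← Finset.card_sdiff_of_subset h.1]
  exact h.2.2.1

lemma csgMove_union {t r : Finset V} (hd : Disjoint t r) (hr : r.card ∈ L) (hrc : ConnOn G r)
    (htc : t = ∅ ∨ ConnOn G t) : CsgMove G L (t ∪ r) t := by
  have hsd : (t ∪ r) \ t = r := Finset.union_sdiff_cancel_left hd
  refine ⟨Finset.subset_union_left, ?_, ?_, ?_, htc⟩ <;> rw [hsd]
  exacts [Finset.coe_nonempty.mp hrc.nonempty, hr, hrc]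

lemma csgGrundy_singleton (hL : 1 ∈ L) (v : V) : csgGrundy G L {v} = 1 := by
  rw [csgGrundy_eq_mex]
  refine mex_eq ?_ fun m hm => ⟨∅, ?_, by rw [csgGrundy_empty]; omega⟩
  · rintro ⟨t, ⟨hts, hne, -⟩, ht⟩
    rcases Finset.subset_singleton_iff.mp hts with rfl | rfl
    · simp [csgGrundy_empty] at ht
    · simp at hne
  · simpa using csgMove_union (Finset.disjoint_empty_left {v}) (by simpa using hL)
      (by simpa using connOn_singleton (G := G) v) (Or.inl rfl)

end Game

namespace S111

abbrev Vert (k : ℕ) := Option (Σ i : Fin 4, Fin (![1, 1, 1, k] i))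

abbrev graph (k : ℕ) : SimpleGraph (Vert k) := subdividedStar ![1, 1, 1, k]

variable {k : ℕ}

def hub : Vert k := none

def leaf (i : Fin 3) : Vert k := some ⟨i.castSucc, ⟨0, by fin_cases i <;> simp⟩⟩

def tail (j : Fin k) : Vert k := some ⟨3, j⟩

def depth : Vert k → ℕ
  | none => 0
  | some ⟨_, j⟩ => j + 1

@[simp] lemma depth_hub : depth (hub : Vert k) = 0 := rfl
@[simp] lemma depth_leaf (i : Fin 3) : depth (leaf i : Vert k) = 1 := rfl
@[simp] lemma depth_tail (j : Fin k) : depth (tail j) = j + 1 := rfl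

@[simp] lemma tail_inj {j j' : Fin k} : tail j = tail j' ↔ j = j' :=
  ⟨fun h => eq_of_heq (Sigma.mk.inj (Option.some.inj h)).2, congrArg _⟩

@[simp] lemma leaf_inj {i i' : Fin 3} : (leaf i : Vert k) = leaf i' ↔ i = i' :=
  ⟨fun h => Fin.castSucc_injective _ (Sigma.mk.inj (Option.some.inj h)).1, congrArg _⟩

@[simp] lemma leaf_ne_tail (i : Fin 3) (j : Fin k) : leaf i ≠ tail j :=
  fun h => (Fin.castSucc_lt_last i).ne (Sigma.mk.inj (Option.some.inj h)).1

@[simp] lemma tail_ne_leaf (i : Fin 3) (j : Fin k) : tail j ≠ leaf i := (leaf_ne_tail i j).symm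
@[simp] lemma hub_ne_leaf (i : Fin 3) : (hub : Vert k) ≠ leaf i := nofun
@[simp] lemma leaf_ne_hub (i : Fin 3) : (leaf i : Vert k) ≠ hub := nofun
@[simp] lemma tail_ne_hub (j : Fin k) : tail j ≠ hub := nofun

lemma vertex_cases (v : Vert k) : v = hub ∨ (∃ i, v = leaf i) ∨ ∃ j, v = tail j := by
  rcases v with _ | ⟨i, j⟩
  · exact Or.inl rfl
  induction i using Fin.lastCases with
  | last => exact Or.inr (Or.inr ⟨j, rfl⟩)
  | cast i =>
    refine Or.inr (Or.inl ⟨i, ?_⟩)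
    have hj : (j : ℕ) = 0 := by fin_cases i <;> simpa using j.isLt
    simp only [leaf, Option.some.injEq]
    congr
    exact Fin.ext hj

lemma Vert.finset_ext {s t : Finset (Vert k)} (hhub : hub ∈ s ↔ hub ∈ t)
    (hleaf : ∀ i, leaf i ∈ s ↔ leaf i ∈ t) (htail : ∀ j, tail j ∈ s ↔ tail j ∈ t) : s = t := by
  ext v
  rcases vertex_cases v with rfl | ⟨i, rfl⟩ | ⟨j, rfl⟩
  exacts [hhub, hleaf i, htail j]

lemma adj_hub_leaf (i : Fin 3) : (graph k).Adj hub (leaf i) := by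
  simp [subdividedStar, hub, leaf]

lemma adj_hub_tail (j : Fin k) : (graph k).Adj hub (tail j) ↔ (j : ℕ) = 0 := by
  simp [subdividedStar, hub, tail]

lemma adj_tail_tail (j j' : Fin k) :
    (graph k).Adj (tail j) (tail j') ↔ (j : ℕ) + 1 = j' ∨ (j' : ℕ) + 1 = j := by
  simp only [subdividedStar, tail, fromRel_adj, ne_eq, true_and]
  refine and_iff_right_of_imp fun h he => ?_
  obtain rfl := tail_inj.mp he
  omega

lemma not_adj_leaf_leaf (i i' : Fin 3) : ¬ (graph k).Adj (leaf i) (leaf i') := by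
  simp [subdividedStar, leaf]

lemma not_adj_leaf_tail (i : Fin 3) (j : Fin k) : ¬ (graph k).Adj (leaf i) (tail j) := by
  simp [subdividedStar, leaf, tail]
  omega

def tailSeg (k a b : ℕ) : Finset (Vert k) :=
  ((Finset.Ico a (min b k)).attachFin fun _ hn =>
    (Finset.mem_Ico.mp hn).2.trans_le (min_le_right _ _)).image tail

def starSet (k : ℕ) (A : Finset (Fin 3)) (m : ℕ) : Finset (Vert k) :=
  insert hub (A.image leaf ∪ tailSeg k 0 m)

section Membership

variable {a b m : ℕ} {A : Finset (Fin 3)}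

@[simp] lemma tail_mem_tailSeg {j : Fin k} : tail j ∈ tailSeg k a b ↔ a ≤ j ∧ j < b := by
  simp [tailSeg]

@[simp] lemma hub_notMem_tailSeg : hub ∉ tailSeg k a b := by simp [tailSeg]

@[simp] lemma leaf_notMem_tailSeg {i : Fin 3} : leaf i ∉ tailSeg k a b := by simp [tailSeg]

@[simp] lemma hub_mem_starSet : hub ∈ starSet k A m := Finset.mem_insert_self _ _

@[simp] lemma leaf_mem_starSet {i : Fin 3} : leaf i ∈ starSet k A m ↔ i ∈ A := by
  simp [starSet]

@[simp] lemma tail_mem_starSet {j : Fin k} : tail j ∈ starSet k A m ↔ j < m := by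
  simp [starSet]

end Membership

section SetAlgebra

variable {a b c m p : ℕ} {A : Finset (Fin 3)}

lemma card_tailSeg (hb : b ≤ k) : (tailSeg k a b).card = b - a := by
  rw [tailSeg, Finset.card_image_of_injective _ fun _ _ => tail_inj.mp, Finset.card_attachFin,
    Nat.card_Ico, min_eq_left hb]

lemma tailSeg_eq_empty (hab : b ≤ a) : tailSeg k a b = ∅ := by
  refine Finset.eq_empty_of_forall_notMem fun v hv => ?_
  rcases vertex_cases v with rfl | ⟨i, rfl⟩ | ⟨j, rfl⟩ <;> simp at hv
  omega

lemma disjoint_tailSeg_tailSeg : Disjoint (tailSeg k a c) (tailSeg k c b) := by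
  refine Finset.disjoint_left.mpr fun v hv hv' => ?_
  rcases vertex_cases v with rfl | ⟨i, rfl⟩ | ⟨j, rfl⟩ <;> simp at hv hv'
  omega

lemma tailSeg_union_tailSeg (hac : a ≤ c) (hcb : c ≤ b) :
    tailSeg k a c ∪ tailSeg k c b = tailSeg k a b :=
  Vert.finset_ext (by simp) (by simp) fun j => by simp; omega

lemma card_starSet (hm : m ≤ k) : (starSet k A m).card = 1 + A.card + m := by
  rw [starSet, Finset.card_insert_of_notMem (by simp), Finset.card_union_of_disjoint
    (Finset.disjoint_left.mpr (by simp)), Finset.card_image_of_injective _ fun _ _ => leaf_inj.mp,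
    card_tailSeg hm]
  omega

lemma disjoint_starSet_tailSeg : Disjoint (starSet k A p) (tailSeg k p m) := by
  refine Finset.disjoint_left.mpr fun v hv hv' => ?_
  rcases vertex_cases v with rfl | ⟨i, rfl⟩ | ⟨j, rfl⟩ <;> simp at hv hv'
  omega

lemma starSet_union_tailSeg (hpm : p ≤ m) : starSet k A p ∪ tailSeg k p m = starSet k A m :=
  Vert.finset_ext (by simp) (by simp) fun j => by simp; omega

lemma disjoint_starSet_erase {i : Fin 3} : Disjoint (starSet k (A.erase i) m) {leaf i} := by
  simp

lemma starSet_erase_union {i : Fin 3} (hi : i ∈ A) :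
    starSet k (A.erase i) m ∪ {leaf i} = starSet k A m :=
  Vert.finset_ext (by simp) (fun i' => by by_cases i' = i <;> simp_all) (by simp)

lemma univ_eq_starSet : (Finset.univ : Finset (Vert k)) = starSet k Finset.univ k :=
  Vert.finset_ext (by simp) (by simp) (by simp)

end SetAlgebra

section Connectivity

variable {a b : ℕ}

lemma connOn_tailSeg (hab : a < b) (hb : b ≤ k) : ConnOn (graph k) (tailSeg k a b) := by
  refine connOn_of_exists_adj_lt (u := tail ⟨a, by omega⟩) (by simp [hab]) depth fun v hv hva => ?_
  rcases vertex_cases v with rfl | ⟨i, rfl⟩ | ⟨j, rfl⟩ <;> simp at hv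
  have hj : a < j := by
    rcases hv.1.lt_or_eq with h | h
    · exact h
    · exact absurd (congrArg tail (Fin.ext h.symm)) hva
  refine ⟨tail ⟨j - 1, by omega⟩, by simp; omega, (adj_tail_tail _ _).mpr (by simp; omega), ?_⟩
  simp; omega

lemma tailSeg_eq_empty_or_connOn (hb : b ≤ k) :
    tailSeg k a b = ∅ ∨ ConnOn (graph k) (tailSeg k a b) := by
  rcases lt_or_ge a b with hab | hab
  exacts [Or.inr (connOn_tailSeg hab hb), Or.inl (tailSeg_eq_empty hab)]

lemma connOn_starSet (A : Finset (Fin 3)) (m : ℕ) : ConnOn (graph k) (starSet k A m) := by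
  refine connOn_of_exists_adj_lt (u := hub) (by simp) depth fun v hv hvu => ?_
  rcases vertex_cases v with rfl | ⟨i, rfl⟩ | ⟨j, rfl⟩
  · exact absurd rfl hvu
  · exact ⟨hub, by simp, (adj_hub_leaf i).symm, by simp⟩
  · simp at hv
    rcases Nat.eq_zero_or_pos (j : ℕ) with hj | hj
    · exact ⟨hub, by simp, ((adj_hub_tail j).mpr hj).symm, by simp⟩
    · refine ⟨tail ⟨j - 1, by omega⟩, by simp; omega, (adj_tail_tail _ _).mpr (by simp; omega), ?_⟩
      simp; omega

end Connectivity

section Classification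

variable {s : Finset (Vert k)}

/-- Here `j + 1 < depth v` means that `v` is a tail vertex beyond `tail j`. -/
lemma lt_depth_of_connOn (h : ConnOn (graph k) s) {j u : Fin k} (hj : tail j ∉ s)
    (hu : tail u ∈ s) (hju : j < u) {v : Vert k} (hv : v ∈ s) : (j : ℕ) + 1 < depth v := by
  refine h.mem_of_adj_closed (S := {v | (j : ℕ) + 1 < depth v}) hu (by simpa using hju) hv ?_
  intro x _ y hy hx hxy
  rcases vertex_cases x with rfl | ⟨i, rfl⟩ | ⟨w, rfl⟩
  · simp at hx
  · simp at hx
  rcases vertex_cases y with rfl | ⟨i, rfl⟩ | ⟨w', rfl⟩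
  · have := (adj_hub_tail w).mp hxy.symm
    simp at hx
    omega
  · exact absurd hxy.symm (not_adj_leaf_tail i w)
  · simp only [Set.mem_ofPred_eq, depth_tail] at hx ⊢
    rcases (adj_tail_tail w w').mp hxy with h' | h'
    · omega
    · rcases (show (j : ℕ) < w' ∨ j = w' by omega) with h'' | rfl
      · omega
      · exact absurd hy hj

lemma eq_singleton_of_connOn (h : ConnOn (graph k) s) (hhub : hub ∉ s) {i : Fin 3}
    (hi : leaf i ∈ s) : s = {leaf i} := by
  refine Finset.eq_singleton_iff_unique_mem.mpr ⟨hi, fun v hv => ?_⟩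
  refine h.mem_of_adj_closed (S := {leaf i}) hi rfl hv fun x _ y hy hx hxy => ?_
  rcases vertex_cases y with rfl | ⟨i', rfl⟩ | ⟨j, rfl⟩
  · exact absurd hy hhub
  · exact absurd (hx ▸ hxy) (not_adj_leaf_leaf i i')
  · exact absurd (hx ▸ hxy) (not_adj_leaf_tail i j)

def tailIndices (s : Finset (Vert k)) : Set ℕ := {n | ∃ hn : n < k, tail ⟨n, hn⟩ ∈ s}

lemma lt_of_mem_tailIndices {n : ℕ} (hn : n ∈ tailIndices s) : n < k := hn.1

@[simp] lemma val_mem_tailIndices {j : Fin k} : (j : ℕ) ∈ tailIndices s ↔ tail j ∈ s :=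
  ⟨fun ⟨_, h⟩ => h, fun h => ⟨j.isLt, h⟩⟩

lemma eq_starSet_of_connOn (h : ConnOn (graph k) s) (hhub : hub ∈ s) :
    ∃ A m, m ≤ k ∧ s = starSet k A m := by
  have hlower : IsLowerSet (tailIndices s) := by
    rintro b a hab ⟨hb, hbs⟩
    refine ⟨hab.trans_lt hb, by_contra fun ha => ?_⟩
    rcases hab.lt_or_eq with hab | rfl
    · simpa using lt_depth_of_connOn h ha hbs hab hhub
    · exact ha hbs
  obtain ⟨m, hm⟩ : ∃ m, tailIndices s = Set.Iio m := hlower.eq_univ_or_Iio.resolve_left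
    fun huniv => (lt_of_mem_tailIndices (huniv ▸ Set.mem_univ k)).false
  have hmk : m ≤ k := le_of_not_gt fun hkm =>
    (lt_of_mem_tailIndices (hm ▸ Set.mem_Iio.mpr hkm : k ∈ tailIndices s)).false
  refine ⟨Finset.univ.filter (leaf · ∈ s), m, hmk, Vert.finset_ext (by simp [hhub]) (by simp)
    fun j => ?_⟩
  rw [← val_mem_tailIndices, hm]
  simp

lemma eq_tailSeg_of_connOn (h : ConnOn (graph k) s) (hhub : hub ∉ s) (hleaf : ∀ i, leaf i ∉ s) :
    ∃ a b, a < b ∧ b ≤ k ∧ s = tailSeg k a b := by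
  have hne : (tailIndices s).Nonempty := by
    obtain ⟨v, hv⟩ := Finset.coe_nonempty.mp h.nonempty
    rcases vertex_cases v with rfl | ⟨i, rfl⟩ | ⟨j, rfl⟩
    exacts [absurd hv hhub, absurd hv (hleaf i), ⟨j, val_mem_tailIndices.mpr hv⟩]
  have hconn : (tailIndices s).OrdConnected := by
    refine ⟨fun a ⟨ha, has⟩ b ⟨hb, hbs⟩ n ⟨han, hnb⟩ => ⟨hnb.trans_lt hb, by_contra fun hn => ?_⟩⟩
    rcases hnb.lt_or_eq with hnb | rfl
    · have := lt_depth_of_connOn h hn hbs hnb has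
      simp at this
      omega
    · exact hn hbs
  obtain ⟨a, b, hab, hbk, hP⟩ := Nat.exists_eq_Ico_of_ordConnected hconn hne
    fun _ => lt_of_mem_tailIndices
  refine ⟨a, b, hab, hbk, Vert.finset_ext (by simp [hhub]) (by simp [hleaf]) fun j => ?_⟩
  rw [← val_mem_tailIndices, hP]
  simp

lemma connOn_cases (h : ConnOn (graph k) s) :
    (∃ i, s = {leaf i}) ∨ (∃ a b, a < b ∧ b ≤ k ∧ s = tailSeg k a b) ∨
      ∃ A m, m ≤ k ∧ s = starSet k A m := by
  by_cases hhub : hub ∈ s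
  · exact Or.inr (Or.inr (eq_starSet_of_connOn h hhub))
  by_cases hleaf : ∃ i, leaf i ∈ s
  · obtain ⟨i, hi⟩ := hleaf
    exact Or.inl ⟨i, eq_singleton_of_connOn h hhub hi⟩
  · exact Or.inr (Or.inl (eq_tailSeg_of_connOn h hhub (not_exists.mp hleaf)))

end Classification

section Arithmetic

lemma pos_of_mem_one_two_four {d : ℕ} (hd : d ∈ ({1, 2, 4} : Set ℕ)) : 0 < d := by
  simp only [Set.mem_insert_iff, Set.mem_singleton_iff] at hd
  omega

lemma mex_pathOptions (n : ℕ) :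
    mex {v | ∃ d ∈ ({1, 2, 4} : Set ℕ), d ≤ n ∧ v = (n - d) % 3} = n % 3 := by
  refine mex_eq ?_ fun v hv => ⟨n % 3 - v, by simp; omega, by omega, by omega⟩
  rintro ⟨d, hd, hdn, h⟩
  simp at hd
  omega

def starValue (c m : ℕ) : ℕ :=
  if c = 0 then (m + 1) % 3
  else if c = 1 then (m + 2) % 3
  else if c = 2 then m % 3
  else if m % 3 = 0 then 1 else if m % 3 = 1 then 0 else 3

/-- The values of the options of a star with `c` leaves and a tail of length `m`, by the shape
of the removed set: the hub with all leaves and `p` tail vertices (leaving a tail segment of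
length `m - p`), the last `d` tail vertices, one leaf, or everything but one leaf. -/
def StarOption (c m v : ℕ) : Prop :=
  (∃ p ≤ m, 1 + c + p ∈ ({1, 2, 4} : Set ℕ) ∧ v = (m - p) % 3) ∨
  (∃ d ∈ ({1, 2, 4} : Set ℕ), d ≤ m ∧ v = starValue c (m - d)) ∨
  (1 ≤ c ∧ v = starValue (c - 1) m) ∨
  (1 ≤ c ∧ c + m ∈ ({1, 2, 4} : Set ℕ) ∧ v = 1)

lemma mex_starOptions {c : ℕ} (hc : c ≤ 3) (m : ℕ) :
    mex {v | StarOption c m v} = starValue c m := by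
  refine mex_eq ?_ fun v hv => ?_
  · rintro (⟨p, hp, hpL, h⟩ | ⟨d, hd, hdm, h⟩ | ⟨hc1, h⟩ | ⟨hc1, hL, h⟩) <;>
      simp only [Set.mem_insert_iff, Set.mem_singleton_iff, starValue] at * <;>
      split_ifs at * <;> omega
  · -- the options with `p ≤ 1`, `d ≤ 2` or one leaf removed already reach every smaller value
    have key : (1 + c ∈ ({1, 2, 4} : Set ℕ) ∧ v = m % 3) ∨
        (1 ≤ m ∧ 2 + c ∈ ({1, 2, 4} : Set ℕ) ∧ v = (m - 1) % 3) ∨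
        (1 ≤ m ∧ v = starValue c (m - 1)) ∨ (2 ≤ m ∧ v = starValue c (m - 2)) ∨
        (1 ≤ c ∧ v = starValue (c - 1) m) := by
      interval_cases c <;> simp only [Set.mem_insert_iff, Set.mem_singleton_iff, starValue] at * <;>
        norm_num at * <;> (try split_ifs at *) <;> omega
    rcases key with ⟨hL, h⟩ | ⟨hm, hL, h⟩ | ⟨hm, h⟩ | ⟨hm, h⟩ | h
    · exact Or.inl ⟨0, Nat.zero_le m, hL, h⟩
    · exact Or.inl ⟨1, hm, by rwa [add_right_comm], h⟩
    · exact Or.inr (Or.inl ⟨1, by simp, hm, h⟩)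
    · exact Or.inr (Or.inl ⟨2, by simp, hm, h⟩)
    · exact Or.inr (Or.inr (Or.inl h))

end Arithmetic

lemma eq_tailSeg_of_move {a b : ℕ} {t : Finset (Vert k)}
    (h : CsgMove (graph k) {1, 2, 4} (tailSeg k a b) t) :
    ∃ a' b', b' ≤ k ∧ t = tailSeg k a' b' := by
  rcases h.2.2.2.2 with rfl | ht
  · exact ⟨0, 0, Nat.zero_le _, (tailSeg_eq_empty le_rfl).symm⟩
  rcases connOn_cases ht with ⟨i, rfl⟩ | ⟨a', b', -, hb', rfl⟩ | ⟨A, m, -, rfl⟩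
  · exact absurd (h.1 (Finset.mem_singleton_self _)) leaf_notMem_tailSeg
  · exact ⟨a', b', hb', rfl⟩
  · exact absurd (h.1 hub_mem_starSet) hub_notMem_tailSeg

theorem grundy_tailSeg {a b : ℕ} (hb : b ≤ k) :
    csgGrundy (graph k) {1, 2, 4} (tailSeg k a b) = (b - a) % 3 := by
  induction hn : b - a using Nat.strong_induction_on generalizing a b with
  | _ n ih =>
  rw [csgGrundy_eq_mex, ← mex_pathOptions n]
  congr 1
  ext v
  constructor
  · rintro ⟨t, hmove, rfl⟩
    obtain ⟨a', b', hb', rfl⟩ := eq_tailSeg_of_move hmove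
    have hd := hmove.card_sub_mem
    have hsub := Finset.card_le_card hmove.1
    rw [card_tailSeg hb, card_tailSeg hb', hn] at hd hsub
    refine ⟨n - (b' - a'), hd, by omega, ?_⟩
    rw [ih (b' - a') (by have := pos_of_mem_one_two_four hd; omega) hb' rfl]
    congr 1
    omega
  · rintro ⟨d, hd, hdn, rfl⟩
    have hd1 := pos_of_mem_one_two_four hd
    refine ⟨tailSeg k a (b - d), ?_, ih _ (by omega) (by omega) (by omega)⟩
    rw [← tailSeg_union_tailSeg (c := b - d) (by omega) (by omega)]
    refine csgMove_union disjoint_tailSeg_tailSeg ?_ (connOn_tailSeg (by omega) hb)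
      (tailSeg_eq_empty_or_connOn (by omega))
    rwa [card_tailSeg hb, show b - (b - d) = d by omega]

section Star

variable {A : Finset (Fin 3)} {m : ℕ} {t : Finset (Vert k)}

lemma starOption_of_move_of_hub_notMem (hm : m ≤ k)
    (h : CsgMove (graph k) {1, 2, 4} (starSet k A m) t) (hhub : hub ∉ t) :
    StarOption A.card m (csgGrundy (graph k) {1, 2, 4} t) := by
  have hcard := h.card_sub_mem
  rw [card_starSet hm] at hcard
  rcases h.2.2.2.2 with rfl | ht
  · exact Or.inl ⟨m, le_rfl, by simpa using hcard, by simp [csgGrundy_empty]⟩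
  rcases connOn_cases ht with ⟨i, rfl⟩ | ⟨a, b, hab, hb, rfl⟩ | ⟨A', m', -, rfl⟩
  · have hi : i ∈ A := by simpa using h.1 (Finset.mem_singleton_self _)
    have hc := Finset.card_pos.mpr ⟨i, hi⟩
    refine Or.inr (Or.inr (Or.inr ⟨hc, ?_, csgGrundy_singleton (by simp) _⟩))
    rwa [Finset.card_singleton, show 1 + A.card + m - 1 = A.card + m by omega] at hcard
  · have hbm : b ≤ m := by
      have := h.1 (tail_mem_tailSeg (j := ⟨b - 1, by omega⟩).mpr ⟨by simp; omega, by simp; omega⟩)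
      simp at this
      omega
    rw [card_tailSeg hb] at hcard
    refine Or.inl ⟨m - (b - a), by omega, ?_, ?_⟩
    · rwa [show 1 + A.card + (m - (b - a)) = 1 + A.card + m - (b - a) by omega]
    · rw [grundy_tailSeg hb]
      congr 1
      omega
  · exact absurd hub_mem_starSet hhub

lemma starOption_of_move_of_hub_mem (hm : m ≤ k)
    (ih : ∀ (A' : Finset (Fin 3)) m', m' ≤ k → A'.card + m' < A.card + m →
      csgGrundy (graph k) {1, 2, 4} (starSet k A' m') = starValue A'.card m')
    (h : CsgMove (graph k) {1, 2, 4} (starSet k A m) t) (hhub : hub ∈ t) :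
    StarOption A.card m (csgGrundy (graph k) {1, 2, 4} t) := by
  have hr : hub ∉ starSet k A m \ t := by simp [hhub]
  rcases connOn_cases h.2.2.2.1 with ⟨i, hri⟩ | ⟨a, b, -, -, hrt⟩ | ⟨A', p, -, hrs⟩
  · have hi : i ∈ A := by
      have : leaf i ∈ starSet k A m \ t := hri ▸ Finset.mem_singleton_self _
      simpa using (Finset.mem_sdiff.mp this).1
    have ht : t = starSet k (A.erase i) m := by
      rw [← Finset.sdiff_sdiff_eq_self h.1, hri, ← starSet_erase_union hi,
        Finset.union_sdiff_cancel_right disjoint_starSet_erase]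
    have hc := Finset.card_pos.mpr ⟨i, hi⟩
    refine Or.inr (Or.inr (Or.inl ⟨hc, ?_⟩))
    rw [ht, ih _ _ hm (by rw [Finset.card_erase_of_mem hi]; omega), Finset.card_erase_of_mem hi]
  · rcases h.2.2.2.2 with rfl | ht
    · simp at hhub
    rcases connOn_cases ht with ⟨i, rfl⟩ | ⟨a', b', -, -, rfl⟩ | ⟨A', m', hm', rfl⟩
    · simp at hhub
    · simp at hhub
    have hA' : A' = A := Finset.ext fun i => by
      have hi : leaf i ∉ starSet k A m \ starSet k A' m' := by simp [hrt]
      simp only [Finset.mem_sdiff, leaf_mem_starSet, not_and, not_not] at hi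
      exact ⟨fun h' => by simpa using h.1 (leaf_mem_starSet.mpr h'), hi⟩
    subst hA'
    have hcard := h.card_sub_mem
    have hle := Finset.card_le_card h.1
    rw [card_starSet hm, card_starSet hm'] at hcard hle
    have hd : m - m' ∈ ({1, 2, 4} : Set ℕ) := by
      rwa [show 1 + A'.card + m - (1 + A'.card + m') = m - m' by omega] at hcard
    have hd1 := pos_of_mem_one_two_four hd
    refine Or.inr (Or.inl ⟨m - m', hd, by omega, ?_⟩)
    rw [ih _ _ hm' (by omega), show m - (m - m') = m' by omega]
  · exact absurd (hrs ▸ hub_mem_starSet) hr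

lemma exists_move_of_starOption (hm : m ≤ k)
    (ih : ∀ (A' : Finset (Fin 3)) m', m' ≤ k → A'.card + m' < A.card + m →
      csgGrundy (graph k) {1, 2, 4} (starSet k A' m') = starValue A'.card m')
    {v : ℕ} (hv : StarOption A.card m v) :
    ∃ t, CsgMove (graph k) {1, 2, 4} (starSet k A m) t ∧ csgGrundy (graph k) {1, 2, 4} t = v := by
  rcases hv with ⟨p, hp, hpL, rfl⟩ | ⟨d, hd, hdm, rfl⟩ | ⟨hc, rfl⟩ | ⟨hc, hL, rfl⟩
  · refine ⟨tailSeg k p m, ?_, grundy_tailSeg hm⟩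
    rw [← starSet_union_tailSeg hp, Finset.union_comm]
    exact csgMove_union disjoint_starSet_tailSeg.symm (by rwa [card_starSet (hp.trans hm)])
      (connOn_starSet A p) (tailSeg_eq_empty_or_connOn hm)
  · have hd1 := pos_of_mem_one_two_four hd
    refine ⟨starSet k A (m - d), ?_, ih _ _ (by omega) (by omega)⟩
    rw [← starSet_union_tailSeg (show m - d ≤ m by omega)]
    refine csgMove_union disjoint_starSet_tailSeg ?_ (connOn_tailSeg (by omega) hm)
      (Or.inr (connOn_starSet A _))
    rwa [card_tailSeg hm, show m - (m - d) = d by omega]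
  · obtain ⟨i, hi⟩ := Finset.card_pos.mp hc
    have hci := Finset.card_erase_of_mem hi
    refine ⟨starSet k (A.erase i) m, ?_, by rw [ih _ _ hm (by omega), hci]⟩
    rw [← starSet_erase_union hi]
    exact csgMove_union disjoint_starSet_erase (by simp)
      (Finset.coe_singleton (leaf i) ▸ connOn_singleton _) (Or.inr (connOn_starSet _ m))
  · obtain ⟨i, hi⟩ := Finset.card_pos.mp hc
    refine ⟨{leaf i}, ?_, csgGrundy_singleton (by simp) _⟩
    rw [← starSet_erase_union hi, Finset.union_comm]
    refine csgMove_union disjoint_starSet_erase.symm ?_ (connOn_starSet _ m)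
      (Or.inr (Finset.coe_singleton (leaf i) ▸ connOn_singleton _))
    rwa [card_starSet hm, Finset.card_erase_of_mem hi,
      show 1 + (A.card - 1) + m = A.card + m by omega]

theorem grundy_starSet (A : Finset (Fin 3)) {m : ℕ} (hm : m ≤ k) :
    csgGrundy (graph k) {1, 2, 4} (starSet k A m) = starValue A.card m := by
  induction hn : A.card + m using Nat.strong_induction_on generalizing A m with
  | _ n ih =>
  subst hn
  have ih' : ∀ (A' : Finset (Fin 3)) m', m' ≤ k → A'.card + m' < A.card + m →
      csgGrundy (graph k) {1, 2, 4} (starSet k A' m') = starValue A'.card m' :=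
    fun A' m' hm' hlt => ih _ hlt A' hm' rfl
  rw [csgGrundy_eq_mex, ← mex_starOptions (by simpa using A.card_le_univ) m]
  congr 1
  ext v
  constructor
  · rintro ⟨t, h, rfl⟩
    by_cases hhub : hub ∈ t
    exacts [starOption_of_move_of_hub_mem hm ih' h hhub,
      starOption_of_move_of_hub_notMem hm h hhub]
  · exact exists_move_of_starOption hm ih'

end Star

end S111

/-- For CSG({1,2,4}), the Grundy value of S(1,1,1,k) is 1, 0, 3 according to
k ≡ 0, 1, 2 mod 3. -/
theorem stmt18 (k : ℕ) :
    csgGrundy (subdividedStar ![1, 1, 1, k]) ({1, 2, 4} : Set ℕ) Finset.univ =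
      if k % 3 = 0 then 1 else if k % 3 = 1 then 0 else 3 := by
  rw [S111.univ_eq_starSet, S111.grundy_starSet _ le_rfl, Finset.card_univ, Fintype.card_fin]
  rfl
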